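/- arXiv:1606.04639 — 6 statements merged into one kernel-verified Lean document; each statement's English description precedes it below -/
import Mathlib

section
/- In the grid-neutral optimal solution (∑_i S_i = 0) of the DAS power allocation problem characterized by the KKT conditions, if the optimal power of RAU k satisfies p_k* = p_max with E_k > p_max (grid-charging), then every RAU j with γ_j > γ_k and E_j > p_max also satisfies p_j* = p_max. -/
open Finset

lemma sqrt_inc_lemma (a b δ : ℝ) (ha : 0 ≤ a) (hδ : 0 < δ) (h1 : a + δ < b)
    (h2 : a < b - δ) :
    Real.sqrt b - Real.sqrt (b - δ) < Real.sqrt (a + δ) - Real.sqrt a := by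
  have h0ad : (0:ℝ) ≤ a + δ := by linarith
  have h0bd : (0:ℝ) ≤ b - δ := by linarith
  have h0b : (0:ℝ) ≤ b := by linarith
  have e1 : Real.sqrt a ^ 2 = a := Real.sq_sqrt ha
  have e2 : Real.sqrt (a + δ) ^ 2 = a + δ := Real.sq_sqrt h0ad
  have e3 : Real.sqrt (b - δ) ^ 2 = b - δ := Real.sq_sqrt h0bd
  have e4 : Real.sqrt b ^ 2 = b := Real.sq_sqrt h0b
  have l1 : Real.sqrt (a + δ) < Real.sqrt b := Real.sqrt_lt_sqrt h0ad h1
  have l2 : Real.sqrt a < Real.sqrt (b - δ) := Real.sqrt_lt_sqrt ha h2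
  have l3 : Real.sqrt (b - δ) < Real.sqrt b := Real.sqrt_lt_sqrt h0bd (by linarith)
  have p1 : 0 < Real.sqrt (a + δ) := Real.sqrt_pos.mpr (by linarith)
  have n1 : 0 ≤ Real.sqrt a := Real.sqrt_nonneg a
  have n3 : 0 ≤ Real.sqrt (b - δ) := Real.sqrt_nonneg _
  nlinarith [mul_pos (sub_pos.mpr l3) (by linarith : (0:ℝ) < Real.sqrt (a+δ) + Real.sqrt a),
    sq_nonneg (Real.sqrt (a+δ) - Real.sqrt a)]

/-- Grid-neutral case: if the optimal power of a grid-charging RAU `k` is `p_max`,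
then every grid-charging RAU `j` with a better channel gain also gets `p_max`. -/
theorem stmt_5 (N : ℕ) (γ E : Fin N → ℝ) (pmax η : ℝ)
    (hγ : ∀ i, 0 < γ i) (hγs : ∀ i j : Fin N, i < j → γ j < γ i)
    (hE : ∀ i, 0 < E i) (hpmax : 0 < pmax) (hη1 : 0 < η) (hη2 : η < 1)
    (p : Fin N → ℝ)
    (hfeas : (∀ i, 0 ≤ p i ∧ p i ≤ pmax) ∧
      ∑ i, (η * max (E i - p i) 0 - max (p i - E i) 0 / η) = 0)
    (hopt : ∀ q : Fin N → ℝ,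
      (∀ i, 0 ≤ q i ∧ q i ≤ pmax) →
      ∑ i, (η * max (E i - q i) 0 - max (q i - E i) 0 / η) = 0 →
      (∑ i, Real.sqrt (q i) * γ i) ^ 2 ≤ (∑ i, Real.sqrt (p i) * γ i) ^ 2)
    (k : Fin N) (hk : p k = pmax) (hkE : pmax < E k) :
    ∀ j : Fin N, γ k < γ j → pmax < E j → p j = pmax := by
  intro j hγjk hEj
  by_contra hne
  obtain ⟨hfp, hsum⟩ := hfeas
  have hjk : j ≠ k := by rintro rfl; exact lt_irrefl _ hγjk
  have hpj0 : 0 ≤ p j := (hfp j).1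
  have hpjlt : p j < pmax := lt_of_le_of_ne (hfp j).2 hne
  set δ : ℝ := (pmax - p j) / 2 with hδdef
  have hδpos : 0 < δ := by simp only [hδdef]; linarith
  have hδlt : δ < pmax := by simp only [hδdef]; linarith
  set q : Fin N → ℝ := fun i => if i = j then p j + δ else if i = k then pmax - δ else p i with hq
  have hqj : q j = p j + δ := by simp [hq]
  have hqk : q k = pmax - δ := by simp [hq, hjk.symm, Ne.symm hjk]
  have hqo : ∀ i, i ≠ j → i ≠ k → q i = p i := by
    intro i h1 h2; simp [hq, h1, h2]
  have hqfeas : ∀ i, 0 ≤ q i ∧ q i ≤ pmax := by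
    intro i
    by_cases h1 : i = j
    · subst h1; rw [hqj]; constructor <;> simp only [hδdef] <;> linarith
    by_cases h2 : i = k
    · subst h2; rw [hqk]; constructor <;> linarith
    · rw [hqo i h1 h2]; exact hfp i
  -- sum constraint for q
  have hterm : ∀ i, (η * max (E i - q i) 0 - max (q i - E i) 0 / η)
      = (η * max (E i - p i) 0 - max (p i - E i) 0 / η)
        + ((if i = j then -(η * δ) else 0) + (if i = k then η * δ else 0)) := by
    intro i
    by_cases h1 : i = j
    · rw [h1, hqj]
      have h3 : p j + δ < E j := by simp only [hδdef]; linarith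
      have hpjE : p j < E j := by linarith
      rw [max_eq_left (by linarith : (0:ℝ) ≤ E j - (p j + δ)),
        max_eq_right (by linarith : p j + δ - E j ≤ (0:ℝ)),
        max_eq_left (by linarith : (0:ℝ) ≤ E j - p j),
        max_eq_right (by linarith : p j - E j ≤ (0:ℝ)),
        if_pos rfl, if_neg hjk]
      ring
    by_cases h2 : i = k
    · rw [h2, hqk, hk]
      rw [max_eq_left (by linarith : (0:ℝ) ≤ E k - (pmax - δ)),
        max_eq_right (by linarith : pmax - δ - E k ≤ (0:ℝ)),
        max_eq_left (by linarith : (0:ℝ) ≤ E k - pmax),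
        max_eq_right (by linarith : pmax - E k ≤ (0:ℝ)),
        if_neg (Ne.symm hjk), if_pos rfl]
      ring
    · rw [hqo i h1 h2]; simp [h1, h2]
  have hqsum : ∑ i, (η * max (E i - q i) 0 - max (q i - E i) 0 / η) = 0 := by
    rw [Finset.sum_congr rfl (fun i _ => hterm i)]
    rw [Finset.sum_add_distrib, Finset.sum_add_distrib, hsum]
    simp [Finset.sum_ite_eq']
  -- objective comparison
  have hobjterm : ∀ i, Real.sqrt (q i) * γ i
      = Real.sqrt (p i) * γ i
        + ((if i = j then (Real.sqrt (p j + δ) - Real.sqrt (p j)) * γ j else 0)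
          + (if i = k then (Real.sqrt (pmax - δ) - Real.sqrt pmax) * γ k else 0)) := by
    intro i
    by_cases h1 : i = j
    · rw [h1, hqj, if_pos rfl, if_neg hjk]; ring
    by_cases h2 : i = k
    · rw [h2, hqk, hk, if_neg (Ne.symm hjk), if_pos rfl]; ring
    · rw [hqo i h1 h2]; simp [h1, h2]
  have hinc : Real.sqrt pmax - Real.sqrt (pmax - δ) < Real.sqrt (p j + δ) - Real.sqrt (p j) := by
    apply sqrt_inc_lemma _ _ _ hpj0 hδpos <;> simp only [hδdef] <;> linarith
  have hincpos : 0 < Real.sqrt pmax - Real.sqrt (pmax - δ) :=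
    sub_pos.mpr (Real.sqrt_lt_sqrt (by linarith) (by linarith))
  have hstep : (Real.sqrt pmax - Real.sqrt (pmax - δ)) * γ k
      < (Real.sqrt (p j + δ) - Real.sqrt (p j)) * γ j := by
    have := hγ k
    nlinarith
  have hgt : ∑ i, Real.sqrt (p i) * γ i < ∑ i, Real.sqrt (q i) * γ i := by
    rw [Finset.sum_congr rfl (fun i _ => hobjterm i)]
    rw [Finset.sum_add_distrib, Finset.sum_add_distrib]
    simp only [Finset.sum_ite_eq', Finset.mem_univ, if_true]
    nlinarith
  have hnn : 0 ≤ ∑ i, Real.sqrt (p i) * γ i :=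
    Finset.sum_nonneg fun i _ => mul_nonneg (Real.sqrt_nonneg _) (hγ i).le
  have := hopt q hqfeas hqsum
  nlinarith
end

section
/- In the grid-neutral optimal solution of the DAS power allocation problem, if the optimal power of RAU k is zero (p_k* = 0), then every RAU j with γ_j < γ_k has optimal power p_j* = 0. -/
open Finset Filter Topology Function

/-! Power is moved from an active RAU `j` to an idle RAU `k` without changing the grid balance
`∑ S_i`. Lowering `p_j` by `ε` raises `S_j` by between `η ε` and `ε / η`, since `S_i` is piecewise
linear in `p_i` with slopes `-η` and `-1 / η`; by the intermediate value theorem an increase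
`δ ≥ η² ε` of `p_k` lowers `S_k` by the same amount. The objective loses
`γ_j (√p_j - √(p_j - ε)) = O(ε)` but gains `γ_k √δ ≥ γ_k η √ε`, so a small enough `ε` improves an
allocation with `p_k = 0 < p_j`. -/

-- `S_i = storageFlow η (E i) (p i)`
noncomputable def storageFlow (η e x : ℝ) : ℝ := η * max (e - x) 0 - max (x - e) 0 / η

section storageFlow

variable {η : ℝ} (e : ℝ)

@[fun_prop]
lemma continuous_storageFlow : Continuous (storageFlow η e) := by
  unfold storageFlow; fun_prop

lemma storageFlow_eq_min_max (x : ℝ) :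
    storageFlow η e x = η * (e - min e x) - (max x e - e) / η := by
  unfold storageFlow
  rcases le_total e x with h | h <;> simp [h]

lemma storageFlow_sub_eq {a b : ℝ} (hab : a ≤ b) :
    ∃ u v, 0 ≤ u ∧ 0 ≤ v ∧ u + v = b - a ∧
      storageFlow η e a - storageFlow η e b = η * u + v / η := by
  refine ⟨min e b - min e a, max b e - max a e, sub_nonneg.2 (min_le_min_left e hab),
    sub_nonneg.2 (max_le_max_right e hab), ?_, ?_⟩
  · linarith [min_add_max e a, min_add_max e b, max_comm a e, max_comm b e]
  · rw [storageFlow_eq_min_max, storageFlow_eq_min_max]; ring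

lemma mul_sub_le_storageFlow_sub {a b : ℝ} (hη : 0 < η) (hη1 : η ≤ 1) (hab : a ≤ b) :
    η * (b - a) ≤ storageFlow η e a - storageFlow η e b := by
  obtain ⟨u, v, hu, hv, huv, h⟩ := storageFlow_sub_eq e hab
  have : η * v ≤ v / η := (mul_le_of_le_one_left hv hη1).trans (le_div_self hv hη hη1)
  rw [h, ← huv]; linear_combination this

lemma storageFlow_sub_le_sub_div {a b : ℝ} (hη : 0 < η) (hη1 : η ≤ 1) (hab : a ≤ b) :
    storageFlow η e a - storageFlow η e b ≤ (b - a) / η := by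
  obtain ⟨u, v, hu, hv, huv, h⟩ := storageFlow_sub_eq e hab
  have : η * u ≤ u / η := (mul_le_of_le_one_left hu hη1).trans (le_div_self hu hη hη1)
  rw [h, ← huv, add_div]; linear_combination this

lemma exists_storageFlow_sub_eq (hη : 0 < η) (hη1 : η ≤ 1) {pmax Δ : ℝ} (hpmax : 0 ≤ pmax)
    (hΔ0 : 0 ≤ Δ) (hΔ : Δ ≤ η * pmax) :
    ∃ δ, η * Δ ≤ δ ∧ δ ≤ pmax ∧ storageFlow η e 0 - storageFlow η e δ = Δ := by
  have hdrop := mul_sub_le_storageFlow_sub e hη hη1 hpmax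
  obtain ⟨δ, ⟨hδ0, hδpmax⟩, hδ⟩ := intermediate_value_Icc' hpmax
    (continuous_storageFlow e).continuousOn
    (show storageFlow η e 0 - Δ ∈ Set.Icc _ _ from ⟨by linarith, by linarith⟩)
  have hΔδ : Δ = storageFlow η e 0 - storageFlow η e δ := by rw [hδ]; ring
  have := storageFlow_sub_le_sub_div e hη hη1 hδ0
  rw [← hΔδ, sub_zero, le_div_iff₀ hη] at this
  exact ⟨δ, by linarith, hδpmax, hΔδ.symm⟩

end storageFlow

lemma sqrt_sub_sqrt_sub_le_div {p ε : ℝ} (hp : 0 < p) (hε0 : 0 ≤ ε) (hε : ε ≤ p) :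
    √p - √(p - ε) ≤ ε / √p := by
  have hle : √(p - ε) ≤ √p := Real.sqrt_le_sqrt (by linarith)
  rw [le_div_iff₀ (Real.sqrt_pos.2 hp)]
  nlinarith [Real.sq_sqrt hp.le, Real.sq_sqrt (sub_nonneg.2 hε), Real.sqrt_nonneg (p - ε)]

lemma eventually_lt_sqrt_sub_add_sqrt {a b p : ℝ} (ha : 0 ≤ a) (hb : 0 < b) (hp : 0 < p) :
    ∀ᶠ ε in 𝓝[>] 0, a * √p < a * √(p - ε) + b * √ε := by
  have hsmall : ∀ᶠ ε in 𝓝[>] (0 : ℝ), a * √ε < b * √p := by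
    have : Tendsto (fun ε ↦ a * √ε) (𝓝[>] 0) (𝓝 0) := by
      refine ((by fun_prop : Continuous fun ε : ℝ ↦ a * √ε).tendsto' 0 0 ?_).mono_left
        nhdsWithin_le_nhds
      simp
    exact this.eventually_lt_const (by positivity)
  filter_upwards [hsmall, Ioc_mem_nhdsGT hp] with ε hε ⟨hε0, hεp⟩
  have hloss := mul_le_mul_of_nonneg_left (sqrt_sub_sqrt_sub_le_div hp hε0.le hεp) ha
  have hsqrtε := Real.sqrt_pos.2 hε0
  have hgain : a * (ε / √p) < b * √ε := by
    rw [mul_div_assoc', div_lt_iff₀ (Real.sqrt_pos.2 hp)]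
    nlinarith [Real.mul_self_sqrt hε0.le]
  linear_combination hloss + hgain

lemma sum_apply_update_update {ι : Type*} [Fintype ι] [DecidableEq ι] (g : ι → ℝ → ℝ)
    (p : ι → ℝ) {j k : ι} (hjk : j ≠ k) (x y : ℝ) :
    ∑ i, g i (update (update p j x) k y i)
      = ∑ i, g i (p i) + (g j x - g j (p j)) + (g k y - g k (p k)) := by
  have h : ∀ i, g i (update (update p j x) k y i)
      = g i (p i) + (Pi.single j (g j x - g j (p j)) : ι → ℝ) i
        + (Pi.single k (g k y - g k (p k)) : ι → ℝ) i := by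
    intro i
    rcases eq_or_ne i k with rfl | hik
    · simp [hjk.symm]
    rcases eq_or_ne i j with rfl | hij
    · simp [hik]
    · simp [hik, hij]
  simp only [h, sum_add_distrib, Finset.sum_pi_single', mem_univ, if_true]

theorem exists_improving_transfer {ι : Type*} [Fintype ι] [DecidableEq ι] {η pmax : ℝ}
    {E γ p : ι → ℝ} (hη : 0 < η) (hη1 : η ≤ 1) (hp : ∀ i, 0 ≤ p i ∧ p i ≤ pmax) {j k : ι}
    (hγj : 0 ≤ γ j) (hγk : 0 < γ k) (hpj : 0 < p j) (hpk : p k = 0) :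
    ∃ q : ι → ℝ, (∀ i, 0 ≤ q i ∧ q i ≤ pmax) ∧
      ∑ i, storageFlow η (E i) (q i) = ∑ i, storageFlow η (E i) (p i) ∧
      ∑ i, √(p i) * γ i < ∑ i, √(q i) * γ i := by
  have hjk : j ≠ k := by rintro rfl; linarith
  have hpmax : 0 < pmax := hpj.trans_le (hp j).2
  obtain ⟨ε, ⟨hgain, hε0, hεp⟩, -, hεpmax⟩ :=
    ((eventually_lt_sqrt_sub_add_sqrt hγj (mul_pos hγk hη) hpj).and (Ioc_mem_nhdsGT hpj)
      |>.and (Ioc_mem_nhdsGT (by positivity : 0 < η ^ 2 * pmax))).exists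
  set Δ := storageFlow η (E j) (p j - ε) - storageFlow η (E j) (p j)
  have hΔlow : η * ε ≤ Δ := by
    simpa using mul_sub_le_storageFlow_sub (E j) hη hη1 (sub_le_self (p j) hε0.le)
  have hΔhigh : Δ ≤ ε / η := by
    simpa [Δ] using storageFlow_sub_le_sub_div (E j) hη hη1 (sub_le_self (p j) hε0.le)
  obtain ⟨δ, hδlow, hδpmax, hδΔ⟩ := exists_storageFlow_sub_eq (E k) hη hη1 hpmax.le
    (by nlinarith) (hΔhigh.trans (by rw [div_le_iff₀ hη]; nlinarith))
  have hsqrtδ : η * √ε ≤ √δ := by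
    rw [← Real.sqrt_sq hη.le, ← Real.sqrt_mul (sq_nonneg η)]
    exact Real.sqrt_le_sqrt (by nlinarith)
  refine ⟨update (update p j (p j - ε)) k δ, fun i ↦ ?_, ?_, ?_⟩
  · simp only [update_apply]
    split_ifs
    · exact ⟨by nlinarith, hδpmax⟩
    · exact ⟨by linarith, by linarith [(hp j).2]⟩
    · exact hp i
  · rw [sum_apply_update_update (fun i ↦ storageFlow η (E i)) p hjk, hpk]
    linarith
  · rw [sum_apply_update_update (fun i x ↦ √x * γ i) p hjk, hpk, Real.sqrt_zero, zero_mul]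
    nlinarith

theorem stmt_6_general (N : ℕ) (γ E : Fin N → ℝ) (pmax η : ℝ)
    (hγ : ∀ i, 0 < γ i) (hη1 : 0 < η) (hη2 : η < 1)
    (p : Fin N → ℝ)
    (hfeas : (∀ i, 0 ≤ p i ∧ p i ≤ pmax) ∧
      ∑ i, (η * max (E i - p i) 0 - max (p i - E i) 0 / η) = 0)
    (hopt : ∀ q : Fin N → ℝ,
      (∀ i, 0 ≤ q i ∧ q i ≤ pmax) →
      ∑ i, (η * max (E i - q i) 0 - max (q i - E i) 0 / η) = 0 →
      (∑ i, Real.sqrt (q i) * γ i) ^ 2 ≤ (∑ i, Real.sqrt (p i) * γ i) ^ 2)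
    (k : Fin N) (hk : p k = 0) :
    ∀ j : Fin N, γ j < γ k → p j = 0 := by
  intro j _
  by_contra hj
  obtain ⟨q, hq, hqflow, hlt⟩ := exists_improving_transfer (E := E) hη1 hη2.le hfeas.1
    (hγ j).le (hγ k) ((hfeas.1 j).1.lt_of_ne' hj) hk
  have hnonneg : 0 ≤ ∑ i, √(p i) * γ i :=
    sum_nonneg fun i _ ↦ mul_nonneg (Real.sqrt_nonneg _) (hγ i).le
  exact (hopt q hq (hqflow.trans hfeas.2)).not_gt (pow_lt_pow_left₀ hlt hnonneg two_ne_zero)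

/-- Grid-neutral case: if the optimal power of RAU `k` is zero, then every RAU `j`
with a worse channel gain also has zero optimal power. -/
theorem stmt_6 (N : ℕ) (γ E : Fin N → ℝ) (pmax η : ℝ)
    (hγ : ∀ i, 0 < γ i) (hγd : ∀ i j : Fin N, i ≠ j → γ i ≠ γ j)
    (hE : ∀ i, 0 < E i) (hpmax : 0 < pmax) (hη1 : 0 < η) (hη2 : η < 1)
    (p : Fin N → ℝ)
    (hfeas : (∀ i, 0 ≤ p i ∧ p i ≤ pmax) ∧
      ∑ i, (η * max (E i - p i) 0 - max (p i - E i) 0 / η) = 0)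
    (hopt : ∀ q : Fin N → ℝ,
      (∀ i, 0 ≤ q i ∧ q i ≤ pmax) →
      ∑ i, (η * max (E i - q i) 0 - max (q i - E i) 0 / η) = 0 →
      (∑ i, Real.sqrt (q i) * γ i) ^ 2 ≤ (∑ i, Real.sqrt (p i) * γ i) ^ 2)
    (k : Fin N) (hk : p k = 0) :
    ∀ j : Fin N, γ j < γ k → p j = 0 :=
  stmt_6_general N γ E pmax η hγ hη1 hη2 p hfeas hopt k hk
end

section
/- In the grid-neutral optimal solution, all grid-charging RAUs k with 0 < p_k* < p_max and p_k* < E_k share a common ratio √(p_k*)/γ_k = κ_G = (∑_i √(p_i*) γ_i)/(μη); all grid-discharging RAUs with 0 < p_k* < p_max and p_k* > E_k share a common ratio √(p_k*)/γ_k = κ_L = (∑_i √(p_i*) γ_i)/(μ/η); and κ_L = η² κ_G < κ_G. In particular, for two grid-charging RAUs j, k with interior powers, p_j* = (γ_j²/γ_k²) p_k*. -/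
/-!
Near an optimum `p`, every RAU `k` with `0 < p k < pmax` and `p k ≠ E k` sits on an affine piece
of its trade term `S_k`, whose slope is `-η` (charging) or `-1/η` (discharging). Moving power
between two such RAUs in the ratio of these slopes keeps the trade balance exactly zero, so the
objective `∑ √(p i) γ i` is stationary along that line. This forces `γ k / (√(p k) σ_k)` to be
the same for all such `k`, where `σ_k ∈ {η, 1/η}` is the slope; that common value, scaled by the
objective, is the multiplier `μ`.
-/

open Finset Filter Topology Set

noncomputable section

lemma exists_pos_forall_eq {α : Type*} {s : Set α} {f : α → ℝ} (hpos : ∀ k ∈ s, 0 < f k)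
    (heq : ∀ j ∈ s, ∀ k ∈ s, f j = f k) : ∃ c, 0 < c ∧ ∀ k ∈ s, f k = c := by
  rcases s.eq_empty_or_nonempty with rfl | ⟨k₀, hk₀⟩
  · exact ⟨1, one_pos, by simp⟩
  · exact ⟨f k₀, hpos k₀ hk₀, fun k hk => heq k hk k₀ hk₀⟩

lemma mul_lt_div_self {μ η : ℝ} (hμ : 0 < μ) (hη : 0 < η) (hη1 : η < 1) : μ * η < μ / η := by
  rw [lt_div_iff₀ hη, mul_assoc]
  exact mul_lt_of_lt_one_right hμ (by nlinarith)

lemma eq_div_sq_mul_of_sqrt_div_eq {a b g h : ℝ} (ha : 0 ≤ a) (hb : 0 ≤ b) (hg : g ≠ 0)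
    (hh : h ≠ 0) (hab : √a / g = √b / h) : a = g ^ 2 / h ^ 2 * b := by
  have hsq := congrArg (· ^ 2) hab
  simp only [div_pow, Real.sq_sqrt ha, Real.sq_sqrt hb] at hsq
  field_simp at hsq ⊢
  linarith

lemma tendsto_add_mul_nhds_zero (a b : ℝ) :
    Tendsto (fun ε : ℝ => a + ε * b) (𝓝 0) (𝓝 a) :=
  (by fun_prop : Continuous fun ε : ℝ => a + ε * b).tendsto' 0 a (by simp)

variable {ι : Type*} [Fintype ι]

/-- The trade term `S_i` of a RAU with local energy `E_i = e` and power `p_i = x`. -/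
def netTrade (η e x : ℝ) : ℝ := η * max (e - x) 0 - max (x - e) 0 / η

/-- Minus the slope of `netTrade η e` at `x` (away from the kink `x = e`). -/
def tradeRate (η e x : ℝ) : ℝ := if x < e then η else η⁻¹

def gridNeutralSet (η pmax : ℝ) (E : ι → ℝ) : Set (ι → ℝ) :=
  {q | (∀ i, q i ∈ Icc 0 pmax) ∧ ∑ i, netTrade η (E i) (q i) = 0}

lemma tradeRate_pos {η : ℝ} (hη : 0 < η) (e x : ℝ) : 0 < tradeRate η e x := by
  unfold tradeRate
  split_ifs <;> positivity

lemma netTrade_eventually_eq {η e x : ℝ} (hx : x ≠ e) :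
    ∀ᶠ y in 𝓝 x, netTrade η e y = netTrade η e x - tradeRate η e x * (y - x) := by
  rcases hx.lt_or_gt with hlt | hgt
  · filter_upwards [eventually_lt_nhds hlt] with y hy
    simp only [netTrade, tradeRate, if_pos hlt, max_eq_left (sub_nonneg.2 hy.le),
      max_eq_left (sub_nonneg.2 hlt.le), max_eq_right (sub_nonpos.2 hy.le),
      max_eq_right (sub_nonpos.2 hlt.le)]
    ring
  · filter_upwards [eventually_gt_nhds hgt] with y hy
    simp only [netTrade, tradeRate, if_neg hgt.not_gt, max_eq_right (sub_nonpos.2 hy.le),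
      max_eq_right (sub_nonpos.2 hgt.le), max_eq_left (sub_nonneg.2 hy.le),
      max_eq_left (sub_nonneg.2 hgt.le)]
    ring

lemma eventually_forall_add_mul_mem_Icc {p v : ι → ℝ} {a b : ℝ} (hp : ∀ i, p i ∈ Icc a b)
    (hv : ∀ i, v i ≠ 0 → p i ∈ Ioo a b) :
    ∀ᶠ ε in 𝓝 (0 : ℝ), ∀ i, p i + ε * v i ∈ Icc a b := by
  refine eventually_all.2 fun i => ?_
  by_cases h : v i = 0
  · simp [h, hp i]
  · filter_upwards [(tendsto_add_mul_nhds_zero (p i) (v i)).eventually_mem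
      (isOpen_Ioo.mem_nhds (hv i h))] with ε hε
    exact Ioo_subset_Icc_self hε

lemma eventually_sum_netTrade_add_mul {η : ℝ} {E p v : ι → ℝ} (hv : ∀ i, v i ≠ 0 → p i ≠ E i) :
    ∀ᶠ ε in 𝓝 (0 : ℝ), ∑ i, netTrade η (E i) (p i + ε * v i)
      = ∑ i, netTrade η (E i) (p i) - ε * ∑ i, v i * tradeRate η (E i) (p i) := by
  have hterm : ∀ᶠ ε in 𝓝 (0 : ℝ), ∀ i, netTrade η (E i) (p i + ε * v i)
      = netTrade η (E i) (p i) - ε * (v i * tradeRate η (E i) (p i)) := by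
    refine eventually_all.2 fun i => ?_
    by_cases h : v i = 0
    · simp [h]
    · filter_upwards [(tendsto_add_mul_nhds_zero (p i) (v i)).eventually
        (netTrade_eventually_eq (hv i h))] with ε hε
      rw [hε]
      ring
  filter_upwards [hterm] with ε hε
  simp only [hε, sum_sub_distrib, mul_sum]

lemma hasDerivAt_sum_sqrt_add_mul {γ p v : ι → ℝ} (hv : ∀ i, v i ≠ 0 → 0 < p i) :
    HasDerivAt (fun ε => ∑ i, √(p i + ε * v i) * γ i) (∑ i, v i * (γ i / (2 * √(p i)))) 0 := by
  refine HasDerivAt.fun_sum fun i _ => ?_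
  by_cases h : v i = 0
  · simpa [h] using hasDerivAt_const (0 : ℝ) (√(p i) * γ i)
  · have hline : HasDerivAt (fun ε : ℝ => p i + ε * v i) (v i) 0 := by
      simpa using ((hasDerivAt_id (0 : ℝ)).mul_const (v i)).const_add (p i)
    refine ((hline.sqrt (by simpa using (hv i h).ne')).mul_const (γ i)).congr_deriv ?_
    rw [zero_mul, add_zero]
    ring

/-- The trade terms are affine near the moved coordinates, so the balance stays exactly zero on
the line `p + ε • v` for small `ε`. -/
lemma sum_mul_div_sqrt_eq_zero_of_isMaxOn {η pmax : ℝ} {γ E p v : ι → ℝ}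
    (hmax : IsMaxOn (fun q => ∑ i, √(q i) * γ i) (gridNeutralSet η pmax E) p)
    (hp : p ∈ gridNeutralSet η pmax E) (hv : ∀ i, v i ≠ 0 → p i ∈ Ioo 0 pmax ∧ p i ≠ E i)
    (hrate : ∑ i, v i * tradeRate η (E i) (p i) = 0) :
    ∑ i, v i * (γ i / (2 * √(p i))) = 0 := by
  have hloc : IsLocalMax (fun ε => ∑ i, √(p i + ε * v i) * γ i) 0 := by
    filter_upwards [eventually_forall_add_mul_mem_Icc hp.1 fun i hi => (hv i hi).1,
      eventually_sum_netTrade_add_mul fun i hi => (hv i hi).2] with ε hbox hbal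
    simpa using hmax ⟨hbox, by rw [hbal, hp.2, hrate, mul_zero, sub_zero]⟩
  exact hloc.hasDerivAt_eq_zero (hasDerivAt_sum_sqrt_add_mul fun i hi => (hv i hi).1.1)

lemma sum_single_sub_single_mul [DecidableEq ι] (j k : ι) (a b : ℝ)
    (f : ι → ℝ) : ∑ i, (Pi.single j a - Pi.single k b : ι → ℝ) i * f i = a * f j - b * f k := by
  simp [sub_mul, sum_sub_distrib, Pi.single_apply]

lemma div_sqrt_mul_tradeRate_eq_of_isMaxOn {η pmax : ℝ} {γ E p : ι → ℝ} (hη : 0 < η)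
    (hmax : IsMaxOn (fun q => ∑ i, √(q i) * γ i) (gridNeutralSet η pmax E) p)
    (hp : p ∈ gridNeutralSet η pmax E) {j k : ι} (hj : p j ∈ Ioo 0 pmax) (hjE : p j ≠ E j)
    (hk : p k ∈ Ioo 0 pmax) (hkE : p k ≠ E k) :
    γ j / (√(p j) * tradeRate η (E j) (p j)) = γ k / (√(p k) * tradeRate η (E k) (p k)) := by
  classical
  rcases eq_or_ne j k with rfl | hjk
  · rfl
  set σj := tradeRate η (E j) (p j)
  set σk := tradeRate η (E k) (p k)
  have hstat := sum_mul_div_sqrt_eq_zero_of_isMaxOn (v := Pi.single j σk - Pi.single k σj)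
    hmax hp ?_ ?_
  · rw [sum_single_sub_single_mul j k σk σj fun i => γ i / (2 * √(p i))] at hstat
    have hσj : 0 < σj := tradeRate_pos hη _ _
    have hσk : 0 < σk := tradeRate_pos hη _ _
    have hsj := Real.sqrt_pos.2 hj.1
    have hsk := Real.sqrt_pos.2 hk.1
    rw [div_eq_div_iff (by positivity) (by positivity)]
    field_simp at hstat
    linarith
  · intro i hi
    by_cases hij : i = j
    · exact hij ▸ ⟨hj, hjE⟩
    by_cases hik : i = k
    · exact hik ▸ ⟨hk, hkE⟩
    simp [hij, hik] at hi
  · rw [sum_single_sub_single_mul j k σk σj fun i => tradeRate η (E i) (p i)]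
    ring

end

theorem stmt_7_general (N : ℕ) (γ E : Fin N → ℝ) (pmax η : ℝ)
    (hγ : ∀ i, 0 < γ i)
    (hη1 : 0 < η) (hη2 : η < 1)
    (p : Fin N → ℝ)
    (hfeas : (∀ i, 0 ≤ p i ∧ p i ≤ pmax) ∧
      ∑ i, (η * max (E i - p i) 0 - max (p i - E i) 0 / η) = 0)
    (hopt : ∀ q : Fin N → ℝ,
      (∀ i, 0 ≤ q i ∧ q i ≤ pmax) →
      ∑ i, (η * max (E i - q i) 0 - max (q i - E i) 0 / η) = 0 →
      (∑ i, Real.sqrt (q i) * γ i) ^ 2 ≤ (∑ i, Real.sqrt (p i) * γ i) ^ 2)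
    (hpos : ∃ i, 0 < p i) :
    ∃ μ : ℝ, 0 < μ ∧
      (∀ k, 0 < p k → p k < pmax → p k < E k →
        Real.sqrt (p k) / γ k = (∑ i, Real.sqrt (p i) * γ i) / (μ * η)) ∧
      (∀ k, 0 < p k → p k < pmax → E k < p k →
        Real.sqrt (p k) / γ k = (∑ i, Real.sqrt (p i) * γ i) / (μ / η)) ∧
      (∑ i, Real.sqrt (p i) * γ i) / (μ / η) =
        η ^ 2 * ((∑ i, Real.sqrt (p i) * γ i) / (μ * η)) ∧
      (∑ i, Real.sqrt (p i) * γ i) / (μ / η) <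
        (∑ i, Real.sqrt (p i) * γ i) / (μ * η) ∧
      (∀ j k, 0 < p j → p j < pmax → p j < E j →
        0 < p k → p k < pmax → p k < E k →
        p j = (γ j ^ 2 / γ k ^ 2) * p k) := by
  set F := ∑ i, √(p i) * γ i
  have hsum_nonneg (q : Fin N → ℝ) : 0 ≤ ∑ i, √(q i) * γ i :=
    sum_nonneg fun i _ => mul_nonneg (Real.sqrt_nonneg _) (hγ i).le
  have hF : 0 < F := by
    obtain ⟨i₀, hi₀⟩ := hpos
    exact sum_pos' (fun i _ => mul_nonneg (Real.sqrt_nonneg _) (hγ i).le)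
      ⟨i₀, mem_univ i₀, mul_pos (Real.sqrt_pos.2 hi₀) (hγ i₀)⟩
  have hmax : IsMaxOn (fun q => ∑ i, √(q i) * γ i) (gridNeutralSet η pmax E) p :=
    fun q hq => (sq_le_sq₀ (hsum_nonneg q) hF.le).1 (hopt q hq.1 hq.2)
  obtain ⟨μ, hμ, hμk⟩ := exists_pos_forall_eq (s := {k | p k ∈ Ioo 0 pmax ∧ p k ≠ E k})
    (f := fun k => F * γ k / (√(p k) * tradeRate η (E k) (p k)))
    (fun k hk => div_pos (mul_pos hF (hγ k))
      (mul_pos (Real.sqrt_pos.2 hk.1.1) (tradeRate_pos hη1 _ _)))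
    (fun j hj k hk => by
      simp only [mul_div_assoc,
        div_sqrt_mul_tradeRate_eq_of_isMaxOn hη1 hmax hfeas hj.1 hj.2 hk.1 hk.2])
  have hratio (k) (h0 : 0 < p k) (h1 : p k < pmax) (hE : p k ≠ E k) :
      √(p k) / γ k = F / (μ * tradeRate η (E k) (p k)) := by
    have := Real.sqrt_pos.2 h0
    have := tradeRate_pos hη1 (E k) (p k)
    have := hγ k
    rw [← hμk k ⟨⟨h0, h1⟩, hE⟩]
    field_simp
  have hcharge (k) (h0 : 0 < p k) (h1 : p k < pmax) (hE : p k < E k) :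
      √(p k) / γ k = F / (μ * η) := by
    rw [hratio k h0 h1 hE.ne, tradeRate, if_pos hE]
  refine ⟨μ, hμ, hcharge, fun k h0 h1 hE => ?_, by field_simp,
    div_lt_div_of_pos_left hF (by positivity) (mul_lt_div_self hμ hη1 hη2),
    fun j k hj0 hj1 hjE hk0 hk1 hkE => eq_div_sq_mul_of_sqrt_div_eq hj0.le hk0.le
      (hγ j).ne' (hγ k).ne' ((hcharge j hj0 hj1 hjE).trans (hcharge k hk0 hk1 hkE).symm)⟩
  rw [hratio k h0 h1 hE.ne', tradeRate, if_neg hE.not_gt, div_eq_mul_inv μ η]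

/-- Grid-neutral case: interior grid-charging RAUs share a common ratio
`√p*ₖ/γₖ = κ_G = (∑ √p*ᵢ γᵢ)/(μη)`, interior grid-discharging RAUs share the ratio
`κ_L = (∑ √p*ᵢ γᵢ)/(μ/η)`, and `κ_L = η² κ_G < κ_G`; in particular interior
grid-charging RAUs `j, k` satisfy `p*ⱼ = (γⱼ²/γₖ²) p*ₖ`. -/
theorem stmt_7 (N : ℕ) (γ E : Fin N → ℝ) (pmax η : ℝ)
    (hγ : ∀ i, 0 < γ i) (hE : ∀ i, 0 < E i) (hpmax : 0 < pmax)
    (hη1 : 0 < η) (hη2 : η < 1)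
    (p : Fin N → ℝ)
    (hfeas : (∀ i, 0 ≤ p i ∧ p i ≤ pmax) ∧
      ∑ i, (η * max (E i - p i) 0 - max (p i - E i) 0 / η) = 0)
    (hopt : ∀ q : Fin N → ℝ,
      (∀ i, 0 ≤ q i ∧ q i ≤ pmax) →
      ∑ i, (η * max (E i - q i) 0 - max (q i - E i) 0 / η) = 0 →
      (∑ i, Real.sqrt (q i) * γ i) ^ 2 ≤ (∑ i, Real.sqrt (p i) * γ i) ^ 2)
    (hpos : ∃ i, 0 < p i) :
    ∃ μ : ℝ, 0 < μ ∧
      (∀ k, 0 < p k → p k < pmax → p k < E k →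
        Real.sqrt (p k) / γ k = (∑ i, Real.sqrt (p i) * γ i) / (μ * η)) ∧
      (∀ k, 0 < p k → p k < pmax → E k < p k →
        Real.sqrt (p k) / γ k = (∑ i, Real.sqrt (p i) * γ i) / (μ / η)) ∧
      (∑ i, Real.sqrt (p i) * γ i) / (μ / η) =
        η ^ 2 * ((∑ i, Real.sqrt (p i) * γ i) / (μ * η)) ∧
      (∑ i, Real.sqrt (p i) * γ i) / (μ / η) <
        (∑ i, Real.sqrt (p i) * γ i) / (μ * η) ∧
      (∀ j k, 0 < p j → p j < pmax → p j < E j →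
        0 < p k → p k < pmax → p k < E k →
        p j = (γ j ^ 2 / γ k ^ 2) * p k) :=
  stmt_7_general N γ E pmax η hγ hη1 hη2 p hfeas hopt hpos
end

section
/- The double-threshold allocation p_k = min(γ_k² κ_G², max(γ_k² κ_L², E_k)) with κ_L = η² κ_G satisfies: p_k = γ_k² κ_G² (grid-charging) if E_k > γ_k² κ_G²; p_k = γ_k² κ_L² (grid-discharging) if E_k < γ_k² κ_L²; and p_k = E_k (grid-passive) otherwise. Moreover, the function κ_G ↦ ∑_{k=1}^N [η·max(E_k − γ_k² κ_G², 0) − max(γ_k² η⁴ κ_G² − E_k, 0)/η] is continuous and monotonically non-increasing in κ_G ≥ 0, and is positive at κ_G = 0, so there exists κ_G* ≥ 0 at which the sum of trade states equals zero. -/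
/-!
Since `κ_L ≤ κ_G`, the allocation is a clamp of `E_k` to `[γ_k²κ_L², γ_k²κ_G²]`. Each summand of
the trade-state sum is non-increasing in `κ_G²`, equals `ηE_k > 0` at `κ_G = 0` and is `≤ 0` once
`γ_k²κ_G² ≥ E_k`; the intermediate value theorem then gives the zero.
-/

open Finset Filter

/-- With `c = γ²`, this is the trade state `S` of an RAU under the double-threshold power
with `κ_G = κ`: it sells the surplus `E - cκ²` at efficiency `η`, or buys the deficit
`cκ_L² - E`, `κ_L = η²κ`, at cost `1/η`. -/
noncomputable def tradeState (η E c κ : ℝ) : ℝ :=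
  η * max (E - c * κ ^ 2) 0 - max (c * η ^ 4 * κ ^ 2 - E) 0 / η

theorem continuous_tradeState (η E c : ℝ) : Continuous (tradeState η E c) := by
  unfold tradeState
  fun_prop

theorem tradeState_zero {η E : ℝ} (c : ℝ) (hE : 0 ≤ E) : tradeState η E c 0 = η * E := by
  simp [tradeState, hE]

theorem tradeState_antitoneOn {η c : ℝ} (E : ℝ) (hη : 0 < η) (hc : 0 ≤ c) :
    AntitoneOn (tradeState η E c) (Set.Ici 0) := by
  intro a ha b _ hab
  have hsq : a ^ 2 ≤ b ^ 2 := pow_le_pow_left₀ ha hab 2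
  unfold tradeState
  gcongr

theorem tradeState_nonpos {η E c κ : ℝ} (hη : 0 < η) (h : E ≤ c * κ ^ 2) :
    tradeState η E c κ ≤ 0 := by
  have hbuy : 0 ≤ max (c * η ^ 4 * κ ^ 2 - E) 0 / η := by positivity
  rw [tradeState, max_eq_right (sub_nonpos.2 h)]
  linarith

theorem exists_nonneg_eq_zero_of_continuous {f : ℝ → ℝ} (hf : Continuous f) (h0 : 0 ≤ f 0)
    (htop : ∀ᶠ x in atTop, f x ≤ 0) : ∃ x, 0 ≤ x ∧ f x = 0 := by
  obtain ⟨M, hfM, hM⟩ := (htop.and (eventually_ge_atTop 0)).exists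
  obtain ⟨x, hx, hfx⟩ := intermediate_value_Icc' hM hf.continuousOn ⟨hfM, h0⟩
  exact ⟨x, hx.1, hfx⟩

/-- The double-threshold allocation `pₖ = min (γₖ²κ_G²) (max (γₖ²κ_L²) Eₖ)` (with
`κ_L = η²κ_G`) takes the charging/discharging/passive form, and the sum of trade
states as a function of `κ_G` is continuous, non-increasing on `[0,∞)`, positive at
`0`, so it has a zero `κ_G* ≥ 0`. -/
theorem stmt_10 (N : ℕ) (γ E : Fin N → ℝ) (η : ℝ)
    (hγ : ∀ k, 0 < γ k) (hE : ∀ k, 0 < E k) (hη1 : 0 < η) (hη2 : η < 1)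
    (hN : 0 < N) :
    (∀ κG : ℝ, 0 < κG →
      let κL := η ^ 2 * κG
      ∀ k, (E k > γ k ^ 2 * κG ^ 2 →
              min (γ k ^ 2 * κG ^ 2) (max (γ k ^ 2 * κL ^ 2) (E k)) = γ k ^ 2 * κG ^ 2) ∧
           (E k < γ k ^ 2 * κL ^ 2 →
              min (γ k ^ 2 * κG ^ 2) (max (γ k ^ 2 * κL ^ 2) (E k)) = γ k ^ 2 * κL ^ 2) ∧
           (γ k ^ 2 * κL ^ 2 ≤ E k → E k ≤ γ k ^ 2 * κG ^ 2 →
              min (γ k ^ 2 * κG ^ 2) (max (γ k ^ 2 * κL ^ 2) (E k)) = E k)) ∧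
    (Continuous (fun κG : ℝ =>
        ∑ k, (η * max (E k - γ k ^ 2 * κG ^ 2) 0 -
              max (γ k ^ 2 * η ^ 4 * κG ^ 2 - E k) 0 / η))) ∧
    (AntitoneOn (fun κG : ℝ =>
        ∑ k, (η * max (E k - γ k ^ 2 * κG ^ 2) 0 -
              max (γ k ^ 2 * η ^ 4 * κG ^ 2 - E k) 0 / η)) (Set.Ici 0)) ∧
    (0 < ∑ k, (η * max (E k - γ k ^ 2 * (0:ℝ) ^ 2) 0 -
              max (γ k ^ 2 * η ^ 4 * (0:ℝ) ^ 2 - E k) 0 / η)) ∧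
    (∃ κG : ℝ, 0 ≤ κG ∧
      ∑ k, (η * max (E k - γ k ^ 2 * κG ^ 2) 0 -
            max (γ k ^ 2 * η ^ 4 * κG ^ 2 - E k) 0 / η) = 0) := by
  change _ ∧ Continuous (fun κ ↦ ∑ k, tradeState η (E k) (γ k ^ 2) κ) ∧
    AntitoneOn (fun κ ↦ ∑ k, tradeState η (E k) (γ k ^ 2) κ) _ ∧
    0 < ∑ k, tradeState η (E k) (γ k ^ 2) 0 ∧ ∃ κ, 0 ≤ κ ∧ ∑ k, tradeState η (E k) (γ k ^ 2) κ = 0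
  have hcont : Continuous (fun κ ↦ ∑ k, tradeState η (E k) (γ k ^ 2) κ) :=
    continuous_finsetSum _ fun k _ ↦ continuous_tradeState _ _ _
  have hpos : 0 < ∑ k, tradeState η (E k) (γ k ^ 2) 0 := by
    simp only [tradeState_zero _ (hE _).le]
    exact sum_pos (fun k _ ↦ mul_pos hη1 (hE k)) (univ_nonempty_iff.2 ⟨⟨0, hN⟩⟩)
  have hsell : ∀ᶠ κ in atTop, ∀ k, E k ≤ γ k ^ 2 * κ ^ 2 := eventually_all.2 fun k ↦
    ((tendsto_pow_atTop two_ne_zero).const_mul_atTop (pow_pos (hγ k) 2)).eventually_ge_atTop _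
  refine ⟨fun κG _ k ↦ ?_, hcont,
    fun a ha b hb hab ↦ sum_le_sum fun k _ ↦ tradeState_antitoneOn _ hη1 (sq_nonneg _) ha hb hab,
    hpos, exists_nonneg_eq_zero_of_continuous hcont hpos.le <|
      hsell.mono fun κ hκ ↦ sum_nonpos fun k _ ↦ tradeState_nonpos hη1 (hκ k)⟩
  have hLG : γ k ^ 2 * (η ^ 2 * κG) ^ 2 ≤ γ k ^ 2 * κG ^ 2 := by
    rw [mul_pow]
    gcongr
    exact mul_le_of_le_one_left (sq_nonneg _)
      (pow_le_one₀ (sq_nonneg η) (pow_le_one₀ hη1.le hη2.le))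
  exact ⟨fun h ↦ min_eq_left (le_max_of_le_right h.le),
    fun h ↦ by rw [max_eq_left h.le, min_eq_right hLG],
    fun h1 h2 ↦ by rw [max_eq_right h1, min_eq_right h2]⟩
end

section
/- If the full-power allocation p_i = p_max for all i yields ∑_i S_i < 0 (i.e., ∑_i E_i < N·p_max + (1−η²)∑_{i∈G}(E_i − p_max)), then any optimal solution of the problem with constraint ∑_i S_i ≥ 0 satisfies ∑_i S_i = 0 (the green smart constraint is active). -/
open Finset

lemma Slip (E η a b : ℝ) (hη : 0 < η) (hab : a ≤ b) :
    (η * max (E - a) 0 - max (a - E) 0 / η) - (η * max (E - b) 0 - max (b - E) 0 / η)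
      ≤ (η + 1/η) * (b - a) := by
  have hη' : 0 < 1/η := by positivity
  have hd1a : 0 ≤ max (E - a) 0 - max (E - b) 0 := by
    rcases le_total (E - a) 0 with h | h <;> rcases le_total (E - b) 0 with h' | h' <;>
      simp [max_eq_left, max_eq_right, h, h'] <;> linarith
  have hd1b : max (E - a) 0 - max (E - b) 0 ≤ b - a := by
    rcases le_total (E - a) 0 with h | h <;> rcases le_total (E - b) 0 with h' | h' <;>
      simp [max_eq_left, max_eq_right, h, h'] <;> linarith
  have hd2a : 0 ≤ max (b - E) 0 - max (a - E) 0 := by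
    rcases le_total (a - E) 0 with h | h <;> rcases le_total (b - E) 0 with h' | h' <;>
      simp [max_eq_left, max_eq_right, h, h'] <;> linarith
  have hd2b : max (b - E) 0 - max (a - E) 0 ≤ b - a := by
    rcases le_total (a - E) 0 with h | h <;> rcases le_total (b - E) 0 with h' | h' <;>
      simp [max_eq_left, max_eq_right, h, h'] <;> linarith
  have h1 : η * (max (E - a) 0 - max (E - b) 0) ≤ η * (b - a) :=
    mul_le_mul_of_nonneg_left hd1b hη.le
  have h2 : (max (b - E) 0 - max (a - E) 0) * (1/η) ≤ (b - a) * (1/η) :=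
    mul_le_mul_of_nonneg_right hd2b hη'.le
  rw [mul_sub] at h1
  rw [sub_mul] at h2
  have e1 : max (a - E) 0 / η = max (a - E) 0 * (1/η) := by ring
  have e2 : max (b - E) 0 / η = max (b - E) 0 * (1/η) := by ring
  have e3 : (η + 1/η) * (b - a) = η * (b - a) + (b - a) * (1/η) := by ring
  linarith [h1, h2]

/-- If full power yields a negative total trade state, then the green smart
constraint is active (`∑ Sᵢ = 0`) at any optimal solution. -/
theorem stmt_13 (N : ℕ) (γ E : Fin N → ℝ) (pmax η : ℝ)
    (hγ : ∀ i, 0 < γ i) (hE : ∀ i, 0 < E i) (hpmax : 0 < pmax)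
    (hη1 : 0 < η) (hη2 : η < 1)
    (hfull : ∑ i, (η * max (E i - pmax) 0 - max (pmax - E i) 0 / η) < 0)
    (p : Fin N → ℝ)
    (hfeas : (∀ i, 0 ≤ p i ∧ p i ≤ pmax) ∧
      0 ≤ ∑ i, (η * max (E i - p i) 0 - max (p i - E i) 0 / η))
    (hopt : ∀ q : Fin N → ℝ,
      (∀ i, 0 ≤ q i ∧ q i ≤ pmax) →
      0 ≤ ∑ i, (η * max (E i - q i) 0 - max (q i - E i) 0 / η) →
      (∑ i, Real.sqrt (q i) * γ i) ^ 2 ≤ (∑ i, Real.sqrt (p i) * γ i) ^ 2) :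
    ∑ i, (η * max (E i - p i) 0 - max (p i - E i) 0 / η) = 0 := by
  obtain ⟨hbox, hs⟩ := hfeas
  by_contra hne
  have hspos : 0 < ∑ i, (η * max (E i - p i) 0 - max (p i - E i) 0 / η) :=
    lt_of_le_of_ne hs (Ne.symm hne)
  set s := ∑ i, (η * max (E i - p i) 0 - max (p i - E i) 0 / η) with hsdef
  -- some coordinate is below pmax
  have hex : ∃ j, p j < pmax := by
    by_contra h
    push_neg at h
    have hall : ∀ i, p i = pmax := fun i => le_antisymm (hbox i).2 (h i)
    have : s = ∑ i, (η * max (E i - pmax) 0 - max (pmax - E i) 0 / η) := by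
      apply Finset.sum_congr rfl
      intro i _
      rw [hall i]
    linarith
  obtain ⟨j, hj⟩ := hex
  have hc : 0 < η + 1/η := by positivity
  set δ : ℝ := min (pmax - p j) (s / (η + 1/η)) with hδdef
  have hδpos : 0 < δ := lt_min (by linarith) (by positivity)
  set q : Fin N → ℝ := Function.update p j (p j + δ) with hqdef
  have hqj : q j = p j + δ := Function.update_self j _ p
  have hqne : ∀ i, i ≠ j → q i = p i := fun i h => Function.update_of_ne h _ p
  have hqbox : ∀ i, 0 ≤ q i ∧ q i ≤ pmax := by
    intro i
    by_cases h : i = j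
    · subst h
      rw [hqj]
      constructor
      · linarith [(hbox i).1]
      · have : δ ≤ pmax - p i := min_le_left _ _
        linarith
    · rw [hqne i h]; exact hbox i
  have hqfeas : 0 ≤ ∑ i, (η * max (E i - q i) 0 - max (q i - E i) 0 / η) := by
    have hdiff : ∑ i, ((η * max (E i - p i) 0 - max (p i - E i) 0 / η)
        - (η * max (E i - q i) 0 - max (q i - E i) 0 / η))
        = (η * max (E j - p j) 0 - max (p j - E j) 0 / η)
          - (η * max (E j - q j) 0 - max (q j - E j) 0 / η) := by
      apply Finset.sum_eq_single_of_mem j (Finset.mem_univ j)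
      intro i _ h
      rw [hqne i h]; ring
    have hlip : (η * max (E j - p j) 0 - max (p j - E j) 0 / η)
        - (η * max (E j - q j) 0 - max (q j - E j) 0 / η) ≤ (η + 1/η) * δ := by
      have := Slip (E j) η (p j) (q j) hη1 (by rw [hqj]; linarith)
      rw [hqj] at this ⊢
      simpa using this
    have hδs : (η + 1/η) * δ ≤ s := by
      have : δ ≤ s / (η + 1/η) := min_le_right _ _
      calc (η + 1/η) * δ ≤ (η + 1/η) * (s / (η + 1/η)) := by
            exact mul_le_mul_of_nonneg_left this hc.le
        _ = s := by field_simp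
    have hsum : ∑ i, ((η * max (E i - p i) 0 - max (p i - E i) 0 / η)
        - (η * max (E i - q i) 0 - max (q i - E i) 0 / η))
        = s - ∑ i, (η * max (E i - q i) 0 - max (q i - E i) 0 / η) := by
      rw [Finset.sum_sub_distrib, hsdef]
    rw [hsum] at hdiff
    linarith [hdiff ▸ (le_trans hlip hδs : _ ≤ s)]
  have hobj := hopt q hqbox hqfeas
  -- but objective strictly increases
  have hlt : ∑ i, Real.sqrt (p i) * γ i < ∑ i, Real.sqrt (q i) * γ i := by
    apply Finset.sum_lt_sum
    · intro i _
      by_cases h : i = j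
      · subst h
        rw [hqj]
        have : Real.sqrt (p i) ≤ Real.sqrt (p i + δ) :=
          Real.sqrt_le_sqrt (by linarith)
        exact mul_le_mul_of_nonneg_right this (hγ i).le
      · rw [hqne i h]
    · refine ⟨j, Finset.mem_univ j, ?_⟩
      rw [hqj]
      have : Real.sqrt (p j) < Real.sqrt (p j + δ) :=
        Real.sqrt_lt_sqrt (hbox j).1 (by linarith)
      exact mul_lt_mul_of_pos_right this (hγ j)
  have hnn : 0 ≤ ∑ i, Real.sqrt (p i) * γ i :=
    Finset.sum_nonneg fun i _ => mul_nonneg (Real.sqrt_nonneg _) (hγ i).le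
  have := pow_lt_pow_left₀ hlt hnn (n := 2) (by norm_num)
  linarith
end

section
/- Under the water-filling allocation p_k = min(p_max, max(ς − 1/γ_k, 0)) with γ_1 > … > γ_N > 0, the sum of trade states ∑_k S_k(p_k) = ∑_k [η·max(E_k − p_k, 0) − max(p_k − E_k, 0)/η] is a continuous, non-increasing function of the water level ς, equal to η∑_k E_k > 0 at ς = 0; hence if ∑_k S_k < 0 when all p_k = p_max, there exists a water level ς* making ∑_k S_k(p_k(ς*)) = 0. -/
open Finset

/-- Under water-filling `pₖ(ς) = min p_max (max (ς − 1/γₖ) 0)`, the total trade state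
is a continuous non-increasing function of the water level `ς`, equal to `η∑Eₖ > 0`
at `ς = 0`; hence if it is negative when all `pₖ = p_max`, a water level `ς*` exists
making it zero. -/
theorem stmt_16 (N : ℕ) (γ E : Fin N → ℝ) (pmax η : ℝ)
    (hγ : ∀ k, 0 < γ k) (hγs : ∀ i j : Fin N, i < j → γ j < γ i)
    (hE : ∀ k, 0 < E k) (hpmax : 0 < pmax) (hη1 : 0 < η) (hη2 : η < 1)
    (hN : 0 < N) :
    let p : ℝ → Fin N → ℝ := fun ς k => min pmax (max (ς - 1 / γ k) 0)
    let F : ℝ → ℝ := fun ς =>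
      ∑ k, (η * max (E k - p ς k) 0 - max (p ς k - E k) 0 / η)
    Continuous F ∧
    Antitone F ∧
    F 0 = η * ∑ k, E k ∧
    0 < η * ∑ k, E k ∧
    (∑ k, (η * max (E k - pmax) 0 - max (pmax - E k) 0 / η) < 0 →
      ∃ ς : ℝ, 0 ≤ ς ∧ F ς = 0) := by
  intro p F
  have hpc : ∀ k, Continuous (fun ς => p ς k) := fun k =>
    continuous_const.min ((continuous_id.sub continuous_const).max continuous_const)
  have hF : Continuous F := by
    apply continuous_finset_sum
    intro k _
    exact (continuous_const.mul ((continuous_const.sub (hpc k)).max continuous_const)).sub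
      ((((hpc k).sub continuous_const).max continuous_const).div_const η)
  have hpmono : ∀ k, Monotone fun ς => p ς k := by
    intro k a b hab
    exact min_le_min le_rfl (max_le_max (by linarith) le_rfl)
  have hg : ∀ (Ek a b : ℝ), a ≤ b →
      η * max (Ek - b) 0 - max (b - Ek) 0 / η ≤ η * max (Ek - a) 0 - max (a - Ek) 0 / η := by
    intro Ek a b hab
    have h1 : max (Ek - b) 0 ≤ max (Ek - a) 0 := max_le_max (by linarith) le_rfl
    have h2 : max (a - Ek) 0 ≤ max (b - Ek) 0 := max_le_max (by linarith) le_rfl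
    have h3 : η * max (Ek - b) 0 ≤ η * max (Ek - a) 0 :=
      mul_le_mul_of_nonneg_left h1 hη1.le
    have h4 : max (a - Ek) 0 / η ≤ max (b - Ek) 0 / η := by gcongr
    linarith
  have hFmono : Antitone F := by
    intro a b hab
    exact Finset.sum_le_sum fun k _ => hg (E k) _ _ (hpmono k hab)
  have hp0 : ∀ k, p 0 k = 0 := by
    intro k
    have : (0:ℝ) - 1 / γ k ≤ 0 := by
      have := (hγ k)
      have : 0 < 1 / γ k := div_pos one_pos (hγ k)
      linarith
    simp only [p]
    rw [max_eq_right this, min_eq_right hpmax.le]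
  have hF0 : F 0 = η * ∑ k, E k := by
    simp only [F, hp0]
    rw [Finset.mul_sum]
    apply Finset.sum_congr rfl
    intro k _
    rw [max_eq_left (by linarith [hE k]), max_eq_right (by linarith [hE k])]
    ring
  have hpos : 0 < η * ∑ k, E k := by
    apply mul_pos hη1
    apply Finset.sum_pos (fun k _ => hE k)
    haveI : Nonempty (Fin N) := Fin.pos_iff_nonempty.mp hN
    exact Finset.univ_nonempty
  refine ⟨hF, hFmono, hF0, hpos, ?_⟩
  intro hneg
  set ς0 : ℝ := pmax + ∑ k, 1 / γ k with hς0
  have hsum_nonneg : ∀ k : Fin N, 1 / γ k ≤ ∑ j, 1 / γ j :=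
    fun k => Finset.single_le_sum (f := fun j => 1 / γ j) (fun j _ => div_nonneg zero_le_one (hγ j).le) (Finset.mem_univ k)
  have hpς0 : ∀ k, p ς0 k = pmax := by
    intro k
    have h1 : pmax ≤ ς0 - 1 / γ k := by
      have h := hsum_nonneg k
      have he : ς0 - 1 / γ k = pmax + (∑ j, 1 / γ j - 1 / γ k) := by rw [hς0]; ring
      rw [he]; linarith
    have h2 : (0:ℝ) ≤ ς0 - 1 / γ k := le_trans hpmax.le h1
    show min pmax (max (ς0 - 1 / γ k) 0) = pmax
    rw [max_eq_left h2, min_eq_left h1]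
  have hFς0 : F ς0 < 0 := by
    simp only [F, hpς0]; exact hneg
  have hς0nn : (0:ℝ) ≤ ς0 := by
    have h0 : (0:ℝ) ≤ ∑ k, 1 / γ k := Finset.sum_nonneg fun k _ => div_nonneg zero_le_one (hγ k).le
    rw [hς0]; linarith
  have := intermediate_value_Icc' hς0nn hF.continuousOn
    (Set.mem_Icc.mpr ⟨hFς0.le, hF0 ▸ hpos.le⟩)
  obtain ⟨ς, hςmem, hςeq⟩ := this
  exact ⟨ς, hςmem.1, hςeq⟩
end
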